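/- arXiv:1707.00366 — 3 statements merged into one kernel-verified Lean document; each statement's English description precedes it below -/
import Mathlib

section
/- For every k ≥ 1, 2^(k-1) ≤ Φ(2^k + 2, 2^(k-1)) ≤ 2^(k-1) + 1. -/
/-- `f x = max {y : ℕ | y * (y + 1) ≤ x}`. -/
def f (x : ℕ) : ℕ := Nat.findGreatest (fun y => y * (y + 1) ≤ x) x

/-- `Phi a L = max {f a₁ + ⋯ + f a_L : a₁ + ⋯ + a_L ≤ a}`. -/
noncomputable def Phi (a L : ℕ) : ℕ :=
  sSup {s | ∃ g : Fin L → ℕ, (∑ i, g i) ≤ a ∧ s = ∑ i, f (g i)}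

/-
Since `y * (y + 1) ≥ 2 * y`, every summand satisfies `2 * f aᵢ ≤ aᵢ`, so `Φ(a, L) ≤ a / 2`;
for `a = 2 ^ k + 2` this is `2 ^ (k - 1) + 1`. Conversely `L` parts equal to `2` cost `2 * L ≤ a`
and each contributes `f 2 = 1`, so `Φ(a, L) ≥ L`.
-/

lemma f_zero : f 0 = 0 := rfl

lemma f_two : f 2 = 1 := by decide

lemma two_mul_f_le (x : ℕ) : 2 * f x ≤ x := by
  rcases Nat.eq_zero_or_pos (f x) with h | h
  · simp [h]
  · have hspec : f x * (f x + 1) ≤ x := (Nat.findGreatest_eq_iff.1 rfl).2.1 h.ne'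
    nlinarith

lemma two_mul_sum_f_le {L : ℕ} (g : Fin L → ℕ) : 2 * ∑ i, f (g i) ≤ ∑ i, g i := by
  rw [Finset.mul_sum]
  exact Finset.sum_le_sum fun i _ => two_mul_f_le (g i)

lemma bddAbove_Phi_set (a L : ℕ) :
    BddAbove {s | ∃ g : Fin L → ℕ, (∑ i, g i) ≤ a ∧ s = ∑ i, f (g i)} := by
  refine ⟨a, ?_⟩
  rintro _ ⟨g, hg, rfl⟩
  have := two_mul_sum_f_le g
  omega

lemma sum_f_le_Phi {a L : ℕ} (g : Fin L → ℕ) (hg : ∑ i, g i ≤ a) :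
    ∑ i, f (g i) ≤ Phi a L :=
  le_csSup (bddAbove_Phi_set a L) ⟨g, hg, rfl⟩

lemma Phi_le_half (a L : ℕ) : Phi a L ≤ a / 2 := by
  refine csSup_le ⟨0, fun _ => 0, by simp, by simp [f_zero]⟩ ?_
  rintro _ ⟨g, hg, rfl⟩
  have := two_mul_sum_f_le g
  omega

lemma le_Phi {a L : ℕ} (hL : 2 * L ≤ a) : L ≤ Phi a L := by
  have h := sum_f_le_Phi (fun _ : Fin L => 2) (by simpa [mul_comm] using hL)
  simpa [f_two] using h

theorem Phi_two_pow_general (k : ℕ) :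
    2 ^ (k - 1) ≤ Phi (2 ^ k + 2) (2 ^ (k - 1)) ∧
      Phi (2 ^ k + 2) (2 ^ (k - 1)) ≤ 2 ^ (k - 1) + 1 := by
  have hpow : 2 ^ k ≤ 2 * 2 ^ (k - 1) ∧ 2 * 2 ^ (k - 1) ≤ 2 ^ k + 2 := by
    cases k with
    | zero => norm_num
    | succ n => simp [pow_succ, mul_comm]
  exact ⟨le_Phi hpow.2, (Phi_le_half _ _).trans (by omega)⟩

theorem Phi_two_pow (k : ℕ) (hk : 1 ≤ k) :
    2 ^ (k - 1) ≤ Phi (2 ^ k + 2) (2 ^ (k - 1)) ∧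
      Phi (2 ^ k + 2) (2 ^ (k - 1)) ≤ 2 ^ (k - 1) + 1 :=
  Phi_two_pow_general k
end

section
/- Let p be an odd prime and a an integer with p/2 < a < p. Write x = a - (p-1)/2. Then the maximum of ∑_{i=1}^{p-1} ⌊√(bᵢ)⌋ over all tuples (b₁,…,b_{p-1}) of nonnegative integers with b₁+⋯+b_{p-1} ≤ 2a equals p - 1 + ⌊2x/3⌋. -/
/-!
Since `(s - 1) (s - 2) ≥ 0`, every `b` satisfies `3 ⌊√b⌋ ≤ b + 2`, with equality at `b = 1` and
`b = 4`. Summing over the `n = p - 1` entries bounds `3 ∑ ⌊√bᵢ⌋` by `2a + 2n = 3n + 2x`, and the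
tuple made of `⌊2x/3⌋` fours and ones elsewhere attains the bound.
-/

open Finset

theorem Nat.three_mul_sqrt_le_add_two (b : ℕ) : 3 * sqrt b ≤ b + 2 := by
  have hsq := sqrt_le' b
  rcases Nat.lt_or_ge (sqrt b) 2 with hlt | hge
  · interval_cases sqrt b <;> omega
  · nlinarith

theorem Finset.three_mul_sum_sqrt_le {ι : Type*} (s : Finset ι) (b : ι → ℕ) :
    3 * ∑ i ∈ s, Nat.sqrt (b i) ≤ ∑ i ∈ s, b i + 2 * #s := by
  rw [card_eq_sum_ones, mul_sum, mul_sum, ← sum_add_distrib]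
  exact sum_le_sum fun i _ => by simpa using Nat.three_mul_sqrt_le_add_two (b i)

theorem Fin.sum_ite_val_lt {M : Type*} [AddCommMonoid M] {n k : ℕ} (hk : k ≤ n) (c d : M) :
    ∑ i : Fin n, (if (i : ℕ) < k then c else d) = k • c + (n - k) • d := by
  have hcard : #{i : Fin n | (i : ℕ) < k} = k := by
    rw [card_filter_val_lt, min_eq_right hk]
  rw [sum_ite, Finset.sum_const, Finset.sum_const, hcard, filter_not,
    card_sdiff_of_subset (filter_subset _ _), hcard, card_univ, Fintype.card_fin]

theorem exists_sum_eq_sum_sqrt_eq {n k : ℕ} (hk : k ≤ n) :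
    ∃ b : Fin n → ℕ, ∑ i, b i = n + 3 * k ∧ ∑ i, Nat.sqrt (b i) = n + k := by
  have hsqrt4 : Nat.sqrt 4 = 2 := Nat.sqrt_eq' 2
  refine ⟨fun i => if (i : ℕ) < k then 4 else 1, ?_, ?_⟩
  · rw [Fin.sum_ite_val_lt hk, smul_eq_mul, smul_eq_mul]
    omega
  · simp only [apply_ite Nat.sqrt, hsqrt4, Nat.sqrt_one]
    rw [Fin.sum_ite_val_lt hk, smul_eq_mul, smul_eq_mul]
    omega

theorem isGreatest_sum_sqrt {n c : ℕ} (hc : c ≤ 3 * n) :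
    IsGreatest {s | ∃ b : Fin n → ℕ, ∑ i, b i ≤ n + c ∧ s = ∑ i, Nat.sqrt (b i)}
      (n + c / 3) := by
  constructor
  · obtain ⟨b, hsum, hsqrt⟩ := exists_sum_eq_sum_sqrt_eq (show c / 3 ≤ n by omega)
    exact ⟨b, by omega, hsqrt.symm⟩
  · rintro s ⟨b, hb, rfl⟩
    have hbound := three_mul_sum_sqrt_le univ b
    rw [card_univ, Fintype.card_fin] at hbound
    omega

theorem max_sum_sqrt_general (p a : ℕ) (hodd : Odd p)
    (ha1 : p < 2 * a) (ha2 : a < p) :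
    IsGreatest
      {s | ∃ b : Fin (p - 1) → ℕ, (∑ i, b i) ≤ 2 * a ∧ s = ∑ i, Nat.sqrt (b i)}
      (p - 1 + 2 * (a - (p - 1) / 2) / 3) := by
  obtain ⟨m, hm⟩ := hodd
  have h2a : p - 1 + 2 * (a - (p - 1) / 2) = 2 * a := by omega
  have h := isGreatest_sum_sqrt (n := p - 1) (c := 2 * (a - (p - 1) / 2)) (by omega)
  rwa [h2a] at h

/-- The maximum of `∑_{i=1}^{p-1} ⌊√(bᵢ)⌋` over tuples of nonnegative integers
`b₁, …, b_{p-1}` with `b₁ + ⋯ + b_{p-1} ≤ 2a` equals `p - 1 + ⌊2x/3⌋`,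
where `x = a - (p-1)/2`. -/
theorem max_sum_sqrt (p a : ℕ) (hp : p.Prime) (hodd : Odd p)
    (ha1 : p < 2 * a) (ha2 : a < p) :
    IsGreatest
      {s | ∃ b : Fin (p - 1) → ℕ, (∑ i, b i) ≤ 2 * a ∧ s = ∑ i, Nat.sqrt (b i)}
      (p - 1 + 2 * (a - (p - 1) / 2) / 3) :=
  max_sum_sqrt_general p a hodd ha1 ha2
end

section
/- Fix x ∈ ℕ. With T the 2-abacus of the partition (1) (first gap at (0,0)) and 𝒯(x) the set of 2-abaci U with w(U)=x and U↑ = T, the set of possible values of Rem(U₁) (number of removable beads on the right runner) as U ranges over 𝒯(x) is exactly {1, 2, …, f(x)+1}, where f(x) = max{y : y(y+1) ≤ x}. -/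
/-- A 2-abacus is modelled as a finite set `B ⊆ ℕ` of bead positions: the bead at
position `n` lies in row `n / 2` on runner `n % 2` (rows increase downwards; all
rows above the displayed window are full). `rem2 B` is the number of removable
beads on the right runner: beads at `(i,1)` with `(i,0)` empty. -/
def rem2 (B : Finset ℕ) : ℕ := (B.filter fun n => n % 2 = 1 ∧ n - 1 ∉ B).card

/-- The set of values `Rem(U₁)` over 2-abaci `U` with `w(U) = x` and `U↑ = T`,
where `T` is the 2-abacus of the partition `(1)` displayed with `r + 1` rows:
beads in all positions of rows `0, …, r - 1` and a bead at `(r, 1)`; first gap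
at `(r, 0)`.  The condition `U↑ = T` says runner `0` carries `r` beads and
runner `1` carries `r + 1` beads, and `w(U) = x` says the total row-sum of `U`
exceeds that of `T` by exactly `x`. -/
def remSetOne (x : ℕ) : Set ℕ :=
  {m | ∃ r : ℕ, ∃ B : Finset ℕ,
    (B.filter fun n => n % 2 = 0).card = r ∧
    (B.filter fun n => n % 2 = 1).card = r + 1 ∧
    (∑ b ∈ B, b / 2) = x + r * r ∧
    m = rem2 B}

open Finset

lemma le_f_iff {k x : ℕ} : k ≤ f x ↔ k * (k + 1) ≤ x := by
  refine ⟨fun hk => ?_, fun hk =>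
    Nat.le_findGreatest (le_trans (Nat.le_mul_of_pos_right k k.succ_pos) hk) hk⟩
  have hf : f x * (f x + 1) ≤ x :=
    Nat.findGreatest_spec (P := fun y => y * (y + 1) ≤ x) (Nat.zero_le x) (by simp)
  exact le_trans (Nat.mul_le_mul hk (Nat.succ_le_succ hk)) hf

lemma injective_two_mul_add (i : ℕ) : Function.Injective fun j : ℕ => 2 * j + i :=
  (add_left_injective i).comp (mul_right_injective₀ two_ne_zero)

lemma range_two_mul_add {i : ℕ} (hi : i < 2) :
    Set.range (fun j => 2 * j + i) = {n | n % 2 = i} := by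
  ext n
  simp only [Set.mem_range, Set.mem_ofPred_eq]
  exact ⟨fun ⟨j, hj⟩ => by omega, fun hn => ⟨n / 2, by omega⟩⟩

noncomputable def runner (B : Finset ℕ) (i : ℕ) : Finset ℕ :=
  B.preimage (fun j => 2 * j + i) (injective_two_mul_add i).injOn

section runner

variable {B : Finset ℕ} {i : ℕ}

@[simp]
lemma mem_runner {j : ℕ} : j ∈ runner B i ↔ 2 * j + i ∈ B := mem_preimage

lemma card_runner (hi : i < 2) : #(runner B i) = #{n ∈ B | n % 2 = i} := by
  classical
  rw [runner, card_preimage]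
  simp only [range_two_mul_add hi, Set.mem_ofPred_eq]

lemma sum_runner (hi : i < 2) : ∑ j ∈ runner B i, j = ∑ n ∈ B with n % 2 = i, n / 2 := by
  classical
  calc ∑ j ∈ runner B i, j = ∑ j ∈ runner B i, (2 * j + i) / 2 :=
        sum_congr rfl fun j _ => by omega
    _ = _ := by
        rw [runner, sum_preimage' _ _ _ (· / 2)]
        simp only [range_two_mul_add hi, Set.mem_ofPred_eq]

end runner

lemma sum_div_two_eq_sum_runner (B : Finset ℕ) :
    ∑ n ∈ B, n / 2 = ∑ j ∈ runner B 0, j + ∑ j ∈ runner B 1, j := by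
  rw [sum_runner two_pos, sum_runner one_lt_two, ← sum_filter_add_sum_filter_not B (· % 2 = 0)]
  congr 1
  exact sum_congr (filter_congr fun n _ => by omega) fun _ _ => rfl

lemma rem2_eq_card_sdiff_runner (B : Finset ℕ) : rem2 B = #(runner B 1 \ runner B 0) := by
  have hrem : {n ∈ B | n % 2 = 1 ∧ n - 1 ∉ B} = (runner B 1 \ runner B 0).image (2 * · + 1) := by
    ext n
    simp only [mem_filter, mem_image, mem_sdiff, mem_runner, add_zero]
    constructor
    · rintro ⟨hn, hodd, hprev⟩
      refine ⟨n / 2, ⟨by rwa [show 2 * (n / 2) + 1 = n by omega], ?_⟩, by omega⟩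
      rwa [show 2 * (n / 2) = n - 1 by omega]
    · rintro ⟨j, ⟨hj, hprev⟩, rfl⟩
      exact ⟨hj, by omega, by rwa [Nat.add_sub_cancel]⟩
  rw [rem2, hrem, card_image_of_injective _ (injective_two_mul_add 1)]


lemma exists_runner_eq (A₀ A₁ : Finset ℕ) : ∃ B, runner B 0 = A₀ ∧ runner B 1 = A₁ := by
  refine ⟨A₀.image (2 * ·) ∪ A₁.image (2 * · + 1), ?_, ?_⟩ <;> ext j <;>
    simp only [mem_runner, mem_union, mem_image] <;> grind

lemma mem_remSetOne_iff {x m : ℕ} : m ∈ remSetOne x ↔ ∃ A₀ A₁ : Finset ℕ,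
    #A₁ = #A₀ + 1 ∧ ∑ j ∈ A₀, j + ∑ j ∈ A₁, j = x + #A₀ * #A₀ ∧ m = #(A₁ \ A₀) := by
  constructor
  · rintro ⟨r, B, h₀, h₁, hsum, rfl⟩
    refine ⟨runner B 0, runner B 1, ?_, ?_, rem2_eq_card_sdiff_runner B⟩
    · rw [card_runner two_pos, card_runner one_lt_two, h₀, h₁]
    · rw [← sum_div_two_eq_sum_runner, hsum, card_runner two_pos, h₀]
  · rintro ⟨A₀, A₁, hcard, hsum, rfl⟩
    obtain ⟨B, rfl, rfl⟩ := exists_runner_eq A₀ A₁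
    refine ⟨#(runner B 0), B, (card_runner two_pos).symm, ?_, ?_,
      (rem2_eq_card_sdiff_runner B).symm⟩
    · rw [← card_runner one_lt_two, hcard]
    · rw [sum_div_two_eq_sum_runner, hsum]

lemma Finset.card_mul_card_le_two_mul_sum_add_card (S : Finset ℕ) :
    #S * #S ≤ 2 * ∑ i ∈ S, i + #S := by
  induction S using Finset.induction_on_max with
  | empty => simp
  | insert a s ha ih =>
    have hna : a ∉ s := fun h => lt_irrefl a (ha a h)
    have hs : #s ≤ a := by simpa using card_le_card fun y hy => mem_range.mpr (ha y hy)
    rw [card_insert_of_notMem hna, sum_insert hna]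
    nlinarith

lemma mul_succ_add_card_mul_card_le_sum {A₀ A₁ : Finset ℕ} {k : ℕ}
    (hcard : #A₁ = #A₀ + 1) (hk : #(A₁ \ A₀) = k + 1) :
    k * (k + 1) + #A₀ * #A₀ ≤ ∑ j ∈ A₀, j + ∑ j ∈ A₁, j := by
  have hinter : #(A₁ ∩ A₀) + (k + 1) = #A₀ + 1 := by
    rw [← hk, card_inter_add_card_sdiff, hcard]
  have hunion : (k + 1) + #A₀ = #(A₁ ∪ A₀) := by
    rw [← hk, card_sdiff_add_card]
  have hsum := sum_union_inter (s₁ := A₁) (s₂ := A₀) (f := id)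
  have bunion := (A₁ ∪ A₀).card_mul_card_le_two_mul_sum_add_card
  have binter := (A₁ ∩ A₀).card_mul_card_le_two_mul_sum_add_card
  simp only [id] at hsum
  rw [← hunion] at bunion
  nlinarith

lemma exists_card_sdiff_eq (k d : ℕ) : ∃ A₀ A₁ : Finset ℕ, #A₁ = #A₀ + 1 ∧
    ∑ j ∈ A₀, j + ∑ j ∈ A₁, j = k * (k + 1) + d + #A₀ * #A₀ ∧ #(A₁ \ A₀) = k + 1 := by
  have hnotmem : 2 * k + d ∉ Ico k (2 * k) := by simp
  have hdisj : Disjoint (insert (2 * k + d) (Ico k (2 * k))) (range k) := by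
    simp only [disjoint_left, mem_insert, mem_Ico, mem_range]
    omega
  have hgauss : (∑ j ∈ range k, j + ∑ j ∈ Ico k (2 * k), j) * 2 + 2 * k = 2 * k * (2 * k) := by
    rw [sum_range_add_sum_Ico _ (by omega), sum_range_id_mul_two, Nat.mul_sub_one,
      Nat.sub_add_cancel (Nat.le_mul_self _)]
  refine ⟨range k, insert (2 * k + d) (Ico k (2 * k)), ?_, ?_, ?_⟩
  · rw [card_insert_of_notMem hnotmem, Nat.card_Ico, card_range]
    omega
  · rw [sum_insert hnotmem, card_range]
    linarith
  · rw [sdiff_eq_self_of_disjoint hdisj, card_insert_of_notMem hnotmem, Nat.card_Ico]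
    omega

/-- The set of possible values of `Rem(U₁)`, over all 2-abaci `U` with `w(U) = x`
and `U↑` equal to the 2-abacus of the partition `(1)`, is exactly
`{1, 2, …, f x + 1}`. -/
theorem rem_set_eq_Icc (x : ℕ) : remSetOne x = {m | 1 ≤ m ∧ m ≤ f x + 1} := by
  ext m
  rw [mem_remSetOne_iff, Set.mem_ofPred_eq]
  constructor
  · rintro ⟨A₀, A₁, hcard, hsum, rfl⟩
    obtain ⟨k, hk⟩ : ∃ k, #(A₁ \ A₀) = k + 1 :=
      Nat.exists_eq_add_of_le' (by have := le_card_sdiff A₀ A₁; omega)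
    have hkx : k * (k + 1) ≤ x := by
      have := mul_succ_add_card_mul_card_le_sum hcard hk
      omega
    rw [hk]
    exact ⟨Nat.le_add_left 1 k, Nat.succ_le_succ (le_f_iff.2 hkx)⟩
  · rintro ⟨hm₁, hm⟩
    obtain ⟨k, rfl⟩ := Nat.exists_eq_add_of_le' hm₁
    have hkx : k * (k + 1) ≤ x := le_f_iff.1 (Nat.le_of_succ_le_succ hm)
    obtain ⟨A₀, A₁, hcard, hsum, hk⟩ := exists_card_sdiff_eq k (x - k * (k + 1))
    exact ⟨A₀, A₁, hcard, by rwa [Nat.add_sub_cancel' hkx] at hsum, hk.symm⟩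
end
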